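/- If G has Seidel spectrum {σ_1,...,σ_n}, then D_m(D_m^*(G)) has Seidel spectrum {m²σ_i - (m-1)² : i = 1,...,n} together with the eigenvalue 2m-1 with multiplicity mn - n and the eigenvalue -1 with multiplicity m²n - mn. -/

import Mathlib

open Matrix Kronecker BigOperators Finset

/-- The all-ones matrix. -/
noncomputable def allOnes (k : Type*) [Fintype k] : Matrix k k ℝ :=
  Matrix.of fun _ _ => 1

/-- The Seidel matrix formed from an adjacency matrix `M`: `S(M) = J - I - 2M`. -/
noncomputable def seidelOf {k : Type*} [Fintype k] [DecidableEq k]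
    (M : Matrix k k ℝ) : Matrix k k ℝ :=
  allOnes k - 1 - 2 • M

/-- The (complex) multiset of eigenvalues of a real matrix: roots of its
characteristic polynomial over `ℂ`. -/
noncomputable def specC {k : Type*} [Fintype k] [DecidableEq k]
    (M : Matrix k k ℝ) : Multiset ℂ :=
  ((M.map (Complex.ofReal)).charpoly).roots

/-- The energy of a real matrix: the sum of absolute values of its eigenvalues. -/
noncomputable def energy {k : Type*} [Fintype k] [DecidableEq k]
    (M : Matrix k k ℝ) : ℝ :=
  ((specC M).map (fun z : ℂ => ‖z‖)).sum

/-! The Seidel matrix of `D_m(H)` is `J_m ⊗ (S(H) + I) - I` and that of `D_m^*(G)` is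
`J_m ⊗ (S(G) - I) + I`. Conjugating `J_m` to `diag(m, 0, …, 0)` turns `J_m ⊗ B + cI`, for `B`
similar to `diag β`, into the diagonal matrix with entries `m βⱼ + c` on the first block and `c`
elsewhere. Starting from a diagonalization of the real symmetric matrix `S(G)`, this computes the
spectrum of `D_m^*(G)` and then, its Seidel matrix being diagonalizable as well, that of
`D_m(D_m^*(G))`. -/

theorem IsConj.charpoly_eq {R k : Type*} [CommRing R] [Fintype k] [DecidableEq k]
    {M N : Matrix k k R} (h : IsConj M N) : M.charpoly = N.charpoly := by
  obtain ⟨c, hc⟩ := h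
  rw [← charpoly_units_conj c M, hc.eq, mul_assoc, ← coe_units_inv, Units.mul_inv, mul_one]

theorem IsConj.kronecker {R k l : Type*} [CommSemiring R] [Fintype k] [DecidableEq k]
    [Fintype l] [DecidableEq l] {A A' : Matrix k k R} {B B' : Matrix l l R}
    (hA : IsConj A A') (hB : IsConj B B') : IsConj (A ⊗ₖ B) (A' ⊗ₖ B') := by
  obtain ⟨c, hc⟩ := hA
  obtain ⟨d, hd⟩ := hB
  refine ⟨GeneralLinearGroup.kronecker c d, ?_⟩
  change _ * _ = _ * _
  simp only [GeneralLinearGroup.kronecker, ← mul_kronecker_mul, hc.eq, hd.eq]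

theorem IsConj.add_smul_one {R A : Type*} [CommSemiring R] [Semiring A] [Algebra R A]
    {x y : A} (h : IsConj x y) (c : R) : IsConj (x + c • 1) (y + c • 1) := by
  obtain ⟨u, hu⟩ := h
  exact ⟨u, hu.add_right ((Commute.one_right _).smul_right c)⟩

namespace Matrix

variable {K : Type*} [Field K] {k : Type*} [Fintype k] [DecidableEq k]

theorem IsHermitian.isConj_diagonal_eigenvalues {𝕜 : Type*} [RCLike 𝕜] {A : Matrix k k 𝕜}
    (hA : A.IsHermitian) : IsConj A (diagonal (RCLike.ofReal ∘ hA.eigenvalues)) := by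
  set U := star hA.eigenvectorUnitary
  have hdiag := hA.conjStarAlgAut_star_eigenvectorUnitary
  rw [Unitary.conjStarAlgAut_apply] at hdiag
  refine ⟨Unitary.toUnits U, ?_⟩
  change (U : Matrix k k 𝕜) * A = _ * U
  rw [← hdiag, mul_assoc _ (star _), Unitary.coe_star_mul_self, mul_one]

theorem isConj_diagonal_add_smul_one {R : Type*} [CommSemiring R] {M : Matrix k k R}
    {d : k → R} (h : IsConj M (diagonal d)) (c : R) : IsConj (M + c • 1) (diagonal fun i => d i + c) := by
  rw [← diagonal_add, ← smul_one_eq_diagonal]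
  exact h.add_smul_one c

variable {m : ℕ} [NeZero m]

/-- The rows of `P` are the all-ones vector and the `eᵢ - e₀` (`i ≠ 0`), left eigenvectors of the
all-ones matrix for the eigenvalues `m` and `0`; `P'` is the inverse of `P`. -/
theorem isConj_allOnes_diagonal (hm : (m : K) ≠ 0) :
    IsConj (of fun _ _ => (1 : K) : Matrix (Fin m) (Fin m) K) (diagonal (Pi.single 0 (m : K))) := by
  let P : Matrix (Fin m) (Fin m) K :=
    of fun i j => if i = 0 then 1 else (1 : Matrix (Fin m) (Fin m) K) i j - if j = 0 then 1 else 0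
  let P' : Matrix (Fin m) (Fin m) K :=
    of fun i j => if j = 0 then (m : K)⁻¹ else (1 : Matrix (Fin m) (Fin m) K) i j - (m : K)⁻¹
  have hPP' : P * P' = 1 := by
    ext i j
    by_cases hi : i = 0 <;> by_cases hj : j = 0 <;>
      simp [P, P', mul_apply, one_apply, hi, hj, @eq_comm _ 0 j, sum_sub_distrib, mul_sub,
        sub_mul, hm]
  refine ⟨⟨P, P', hPP', mul_eq_one_comm.mp hPP'⟩, ?_⟩
  change P * _ = _ * P
  ext i j
  rw [diagonal_mul]
  by_cases hi : i = 0 <;> simp [P, mul_apply, one_apply, hi, sum_sub_distrib]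

theorem isConj_allOnes_kronecker_add_smul_one (hm : (m : K) ≠ 0) {B : Matrix k k K}
    {β : k → K} (hB : IsConj B (diagonal β)) (c : K) :
    IsConj ((of fun _ _ => (1 : K) : Matrix (Fin m) (Fin m) K) ⊗ₖ B + c • 1)
      (diagonal fun x => if x.1 = 0 then m * β x.2 + c else c) := by
  have h := (isConj_allOnes_diagonal hm).kronecker hB
  rw [diagonal_kronecker_diagonal] at h
  convert isConj_diagonal_add_smul_one h c using 3 with x
  by_cases hx : x.1 = 0 <;> simp [hx]

end Matrix

theorem Multiset.map_univ_ite_fst_eq_zero {α k : Type*} [Fintype k] {m : ℕ} [NeZero m]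
    (f : k → α) (c : α) :
    (univ : Finset (Fin m × k)).val.map (fun x => if x.1 = 0 then f x.2 else c) =
      (univ : Finset k).val.map f + replicate ((m - 1) * Fintype.card k) c := by
  have h0 : (0 : Fin m) ∈ (univ : Finset (Fin m)).val := mem_univ_val _
  rw [← univ_product_univ, product_val, ← cons_erase h0, cons_product, map_add, map_map]
  congr 1
  rw [map_congr rfl (g := fun _ => c), map_const', card_product, card_erase_of_mem h0, card_val,
    card_val, card_univ, card_univ, Fintype.card_fin]
  · rfl
  rintro x hx
  rw [if_neg ((univ : Finset (Fin m)).nodup.mem_erase_iff.mp (mem_product.mp hx).1).1]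

section Seidel

variable {k l : Type*} [Fintype k] [DecidableEq k] [Fintype l] [DecidableEq l]

theorem specC_eq_map_of_isConj_diagonal {M : Matrix k k ℝ} {d : k → ℝ}
    (h : IsConj M (diagonal d)) : specC M = univ.val.map fun i => (d i : ℂ) := by
  rw [specC, show M.map Complex.ofReal = M.map Complex.ofRealHom from rfl, charpoly_map,
    h.charpoly_eq, charpoly_diagonal, Polynomial.map_prod, Polynomial.roots_prod]
  · simp
  · simp [Finset.prod_ne_zero_iff, Polynomial.X_sub_C_ne_zero]

theorem specC_add_smul_one {M : Matrix k k ℝ} {d : k → ℝ} (h : IsConj M (diagonal d)) (c : ℝ) :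
    specC (M + c • 1) = (specC M).map (· + (c : ℂ)) := by
  rw [specC_eq_map_of_isConj_diagonal (isConj_diagonal_add_smul_one h c),
    specC_eq_map_of_isConj_diagonal h, Multiset.map_map]
  push_cast
  rfl

theorem specC_allOnes_kronecker_add_smul_one {m : ℕ} [NeZero m] {B : Matrix k k ℝ} {β : k → ℝ}
    (hB : IsConj B (diagonal β)) (c : ℝ) :
    specC (allOnes (Fin m) ⊗ₖ B + c • 1) =
      (specC B).map (fun z => (m : ℂ) * z + c) +
        Multiset.replicate ((m - 1) * Fintype.card k) (c : ℂ) := by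
  have hm : (m : ℝ) ≠ 0 := Nat.cast_ne_zero.mpr (NeZero.ne m)
  have hconj : IsConj (allOnes (Fin m) ⊗ₖ B + c • 1) _ :=
    isConj_allOnes_kronecker_add_smul_one hm hB c
  rw [specC_eq_map_of_isConj_diagonal hconj, specC_eq_map_of_isConj_diagonal hB,
    Multiset.map_map]
  simp only [apply_ite Complex.ofReal]
  rw [Multiset.map_univ_ite_fst_eq_zero (fun j => ((m * β j + c : ℝ) : ℂ))]
  push_cast
  rfl

theorem seidelOf_allOnes_kronecker (M : Matrix k k ℝ) :
    seidelOf (allOnes l ⊗ₖ M) = allOnes l ⊗ₖ (seidelOf M + (1 : ℝ) • 1) + (-1 : ℝ) • 1 := by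
  ext ⟨a, b⟩ ⟨a', b'⟩
  simp only [seidelOf, allOnes, Matrix.add_apply, Matrix.sub_apply, Matrix.smul_apply,
    kroneckerMap_apply, of_apply, one_apply, Prod.mk.injEq, smul_eq_mul]
  split_ifs <;> simp_all; ring

theorem seidelOf_allOnes_kronecker_add_one_sub_one (M : Matrix k k ℝ) :
    seidelOf (allOnes l ⊗ₖ (M + 1) - 1) =
      allOnes l ⊗ₖ (seidelOf M + (-1 : ℝ) • 1) + (1 : ℝ) • 1 := by
  ext ⟨a, b⟩ ⟨a', b'⟩
  simp only [seidelOf, allOnes, Matrix.add_apply, Matrix.sub_apply, Matrix.smul_apply,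
    kroneckerMap_apply, of_apply, one_apply, Prod.mk.injEq, smul_eq_mul]
  split_ifs <;> simp_all; ring

theorem isSymm_seidelOf {M : Matrix k k ℝ} (hM : M.IsSymm) : (seidelOf M).IsSymm :=
  ((IsSymm.ext fun _ _ => rfl : (allOnes k).IsSymm).sub isSymm_one).sub (hM.smul 2)

end Seidel

theorem seidel_spectrum_DmDmstar {m n : ℕ} (hm : 1 ≤ m) (G : SimpleGraph (Fin n))
    [DecidableRel G.Adj] :
    specC (seidelOf (allOnes (Fin m) ⊗ₖ (allOnes (Fin m) ⊗ₖ (G.adjMatrix ℝ + 1) - 1))) =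
      (specC (seidelOf (G.adjMatrix ℝ))).map
          (fun σ => (m : ℂ) ^ 2 * σ - ((m : ℂ) - 1) ^ 2) +
        Multiset.replicate (m * n - n) (2 * (m : ℂ) - 1) +
        Multiset.replicate (m ^ 2 * n - m * n) (-1 : ℂ) := by
  have : NeZero m := ⟨by omega⟩
  have hm' : (m : ℝ) ≠ 0 := Nat.cast_ne_zero.mpr (NeZero.ne m)
  set S := seidelOf (G.adjMatrix ℝ)
  have hS : S.IsHermitian := isHermitian_iff_isSymm.mpr (isSymm_seidelOf G.isSymm_adjMatrix)
  have hS₁ := isConj_diagonal_add_smul_one hS.isConj_diagonal_eigenvalues (-1)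
  have hDstar₁ : IsConj (allOnes (Fin m) ⊗ₖ (S + (-1 : ℝ) • 1) + (1 : ℝ) • 1) _ :=
    isConj_allOnes_kronecker_add_smul_one hm' hS₁ 1
  have hDstar₂ := isConj_diagonal_add_smul_one hDstar₁ 1
  rw [seidelOf_allOnes_kronecker, seidelOf_allOnes_kronecker_add_one_sub_one,
    specC_allOnes_kronecker_add_smul_one hDstar₂, specC_add_smul_one hDstar₁,
    specC_allOnes_kronecker_add_smul_one hS₁, specC_add_smul_one hS.isConj_diagonal_eigenvalues]
  simp only [Multiset.map_add, Multiset.map_map, Multiset.map_replicate, Function.comp_def,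
    Fintype.card_prod, Fintype.card_fin]
  push_cast
  congr 2
  · congr 1; funext σ; ring
  · rw [Nat.sub_mul, one_mul]; congr 1; ring
  · rw [Nat.sub_mul, one_mul, sq, mul_assoc]
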